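/- Valid ledgers are tamper-evident: if l is a valid ledger, i is an index with i + 1 < l.length, and b is a block with b ≠ l.get i, then the list obtained from l by replacing the i-th block with b (i.e., l.set i b) is not a valid ledger; any modification of a non-terminal block invalidates the connection to the following block. -/

import Mathlib

def ValidLedger {α β : Type*} (h : α × β → α) (g₀ : α) (l : List (α × β)) : Prop :=
  ∃ hpos : 0 < l.length,
    (l[0]'hpos).1 = g₀ ∧
    ∀ i : ℕ, ∀ hi : i + 1 < l.length, (l[i + 1]'hi).1 = h (l[i]'(by omega))

namespace ValidLedger

variable {α β : Type*} {h : α × β → α} {g₀ g₀' : α} {l l' : List (α × β)}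

theorem prevHash_getElem_succ (hl : ValidLedger h g₀ l) (i : ℕ) (hi : i + 1 < l.length) :
    (l[i + 1]'hi).1 = h (l[i]'(by omega)) := by
  obtain ⟨-, -, hchain⟩ := hl
  exact hchain i hi

theorem getElem_eq_of_getElem_succ_eq (hinj : Function.Injective h)
    (hl : ValidLedger h g₀ l) (hl' : ValidLedger h g₀' l') {i : ℕ}
    (hi : i + 1 < l.length) (hi' : i + 1 < l'.length) (hsucc : l[i + 1] = l'[i + 1]) :
    l[i] = l'[i] :=
  hinj <| by rw [← hl.prevHash_getElem_succ i hi, ← hl'.prevHash_getElem_succ i hi', hsucc]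

end ValidLedger

/-- Theorem 3: valid ledgers are tamper-evident: replacing a non-terminal block
of a valid ledger by a different block yields an invalid ledger. -/
theorem ledger_tamper_evident {α β : Type*} (h : α × β → α)
    (hinj : Function.Injective h) (g₀ : α)
    (l : List (α × β)) (hl : ValidLedger h g₀ l)
    (i : ℕ) (hi : i + 1 < l.length) (b : α × β) (hb : b ≠ l[i]'(by omega)) :
    ¬ ValidLedger h g₀ (l.set i b) := by
  intro htampered
  have hi' : i + 1 < (l.set i b).length := by simpa using hi
  have hsucc : (l.set i b)[i + 1] = l[i + 1] := List.getElem_set_ne (by omega) _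
  apply hb
  simpa using htampered.getElem_eq_of_getElem_succ_eq hinj hl hi' hi hsucc
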